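/- Let c, μ_A, μ_B be real numbers with 0 < c < 1 and μ_A > μ_B > c, and set ē := (1 - c)·c/(2 - c). Define on (0, ē] the functions p̃*(e) := (μ_A - c)/(1 + (c/(c - e))·(μ_B - c)) and p̂*(e) := e/c. Then p̃* is strictly decreasing and p̂* is strictly increasing on (0, ē], and there exists ê ∈ (0, ē] such that for every e ∈ (0, ē]: p̃*(e) ≥ p̂*(e) if and only if e ≤ ê. Consequently, p̄*(e) := max(p̃*(e), p̂*(e)) equals p̃*(e) for e ≤ ê and equals p̂*(e) for e > ê, so p̄* is strictly decreasing on (0, ê] and strictly increasing on [ê, ē]. -/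
import Mathlib


/-- On `(0, ē]` with `ē := (1 - c)·c/(2 - c)`, the feasibility cutoff
`p̃*(e) := (μ_A - c)/(1 + (c/(c - e))·(μ_B - c))` is strictly decreasing and the optimality
cutoff `p̂*(e) := e/c` is strictly increasing; there exists `ê ∈ (0, ē]` such that for every
`e ∈ (0, ē]`, `p̃*(e) ≥ p̂*(e)` iff `e ≤ ê`; consequently `p̄*(e) := max(p̃*(e), p̂*(e))`
equals `p̃*(e)` for `e ≤ ê` and equals `p̂*(e)` for `e > ê`, and `p̄*` is strictly decreasing
on `(0, ê]` and strictly increasing on `[ê, ē]`. -/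

theorem stmt_19 (c μA μB : ℝ) (hc0 : 0 < c) (hc1 : c < 1) (hAB : μA > μB) (hBc : μB > c) :
    let ebar := (1 - c) * c / (2 - c)
    let ptil : ℝ → ℝ := fun e => (μA - c) / (1 + (c / (c - e)) * (μB - c))
    let phat : ℝ → ℝ := fun e => e / c
    let pbar : ℝ → ℝ := fun e => max (ptil e) (phat e)
    StrictAntiOn ptil (Set.Ioc 0 ebar) ∧
    StrictMonoOn phat (Set.Ioc 0 ebar) ∧
    ∃ ehat ∈ Set.Ioc (0 : ℝ) ebar,
      (∀ e ∈ Set.Ioc (0 : ℝ) ebar, ptil e ≥ phat e ↔ e ≤ ehat) ∧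
      (∀ e ∈ Set.Ioc (0 : ℝ) ebar,
        (e ≤ ehat → pbar e = ptil e) ∧ (ehat < e → pbar e = phat e)) ∧
      StrictAntiOn pbar (Set.Ioc 0 ehat) ∧
      StrictMonoOn pbar (Set.Icc ehat ebar) := by
  intro ebar ptil phat pbar
  have hμA : 0 < μA - c := by linarith
  have hμB : 0 < μB - c := by linarith
  have h2c : 0 < 2 - c := by linarith
  have hebar_pos : 0 < ebar := div_pos (mul_pos (by linarith) hc0) h2c
  have hebar_lt : ebar < c := by
    show (1 - c) * c / (2 - c) < c
    rw [div_lt_iff₀ h2c]; nlinarith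
  have hsub : ∀ e : ℝ, e ≤ ebar → 0 < c - e := fun e he => by linarith
  have hD : ∀ e : ℝ, e ≤ ebar → 0 < 1 + (c / (c - e)) * (μB - c) := by
    intro e he
    have h1 : 0 < c / (c - e) := div_pos hc0 (hsub e he)
    nlinarith
  have hptil_anti : StrictAntiOn ptil (Set.Icc 0 ebar) := by
    intro e1 h1 e2 h2 h12
    have hs1 := hsub e1 h1.2
    have hs2 := hsub e2 h2.2
    have hfrac : c / (c - e1) < c / (c - e2) :=
      div_lt_div_of_pos_left hc0 hs2 (by linarith)
    have hDlt : 1 + (c / (c - e1)) * (μB - c) < 1 + (c / (c - e2)) * (μB - c) := by nlinarith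
    exact div_lt_div_of_pos_left hμA (hD e1 h1.2) hDlt
  have hphat_mono : StrictMonoOn phat (Set.Icc 0 ebar) := by
    intro e1 _ e2 _ h12
    show e1 / c < e2 / c
    exact div_lt_div_of_pos_right h12 hc0
  have hg_anti : StrictAntiOn (fun e => ptil e - phat e) (Set.Icc 0 ebar) := by
    intro a ha b hb hab
    have h1 := hptil_anti ha hb hab
    have h2 := hphat_mono ha hb hab
    show ptil b - phat b < ptil a - phat a
    linarith
  have main : ∃ ehat, ehat ∈ Set.Ioc (0 : ℝ) ebar ∧
      (∀ e ∈ Set.Ioc (0 : ℝ) ebar, ptil e ≥ phat e ↔ e ≤ ehat) ∧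
      (ehat < ebar → ptil ehat = phat ehat) := by
    rcases le_or_gt (phat ebar) (ptil ebar) with h | h
    · refine ⟨ebar, ⟨hebar_pos, le_refl _⟩, fun e he => ⟨fun _ => he.2, fun hle => ?_⟩,
        fun hlt => absurd hlt (lt_irrefl _)⟩
      rcases eq_or_lt_of_le hle with heq | hlt
      · rw [heq]; exact h
      · have h1 := hptil_anti ⟨he.1.le, he.2⟩ ⟨hebar_pos.le, le_refl _⟩ hlt
        have h2 := hphat_mono ⟨he.1.le, he.2⟩ ⟨hebar_pos.le, le_refl _⟩ hlt
        show phat e ≤ ptil e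
        linarith
    · have hg0 : 0 < ptil 0 - phat 0 := by
        have h1 : 0 < ptil 0 := div_pos hμA (hD 0 hebar_pos.le)
        have h2 : phat 0 = 0 := zero_div c
        linarith
      have hcont : ContinuousOn (fun e => ptil e - phat e) (Set.Icc 0 ebar) := by
        show ContinuousOn (fun e => (μA - c) / (1 + (c / (c - e)) * (μB - c)) - e / c)
          (Set.Icc 0 ebar)
        apply ContinuousOn.sub
        · apply ContinuousOn.div continuousOn_const
          · exact continuousOn_const.add
              (((continuousOn_const.div
                ((continuous_const.sub continuous_id).continuousOn)
                (fun x hx => (hsub x hx.2).ne')).mul continuousOn_const))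
          · exact fun x hx => (hD x hx.2).ne'
        · exact (continuous_id.div_const c).continuousOn
      obtain ⟨ehat, hmem, hgz⟩ := intermediate_value_Icc' hebar_pos.le hcont
        ⟨show ptil ebar - phat ebar ≤ 0 by linarith, le_of_lt hg0⟩
      have hgz' : ptil ehat - phat ehat = 0 := hgz
      have hpos : 0 < ehat := by
        rcases hmem.1.lt_or_eq with h' | h'
        · exact h'
        · exfalso; rw [← h'] at hgz'; linarith
      refine ⟨ehat, ⟨hpos, hmem.2⟩, fun e he => ⟨?_, ?_⟩, fun _ => by linarith⟩
      · intro hge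
        by_contra hgt
        push_neg at hgt
        have hlt : ptil e - phat e < ptil ehat - phat ehat :=
          hg_anti ⟨hmem.1, hmem.2⟩ ⟨he.1.le, he.2⟩ hgt
        have : phat e ≤ ptil e := hge
        linarith
      · intro hle
        rcases eq_or_lt_of_le hle with heq | hlt
        · show phat e ≤ ptil e
          rw [heq]; linarith
        · have hgt : ptil ehat - phat ehat < ptil e - phat e :=
            hg_anti ⟨he.1.le, he.2⟩ ⟨hmem.1, hmem.2⟩ hlt
          show phat e ≤ ptil e
          linarith
  obtain ⟨ehat, hmemE, hiff, hroot⟩ := main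
  have hmax2 : ∀ e ∈ Set.Ioc (0 : ℝ) ebar, ehat < e → pbar e = phat e := by
    intro e he hgt
    have hnot : ¬ (ptil e ≥ phat e) := fun hge => absurd ((hiff e he).mp hge) (not_le.mpr hgt)
    exact max_eq_right (le_of_lt (not_le.mp hnot))
  refine ⟨hptil_anti.mono Set.Ioc_subset_Icc_self, hphat_mono.mono Set.Ioc_subset_Icc_self,
    ehat, hmemE, hiff, fun e he => ⟨fun hle => max_eq_left ((hiff e he).mpr hle),
      hmax2 e he⟩, ?_, ?_⟩
  · intro e1 h1 e2 h2 h12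
    have m1 : e1 ∈ Set.Ioc (0 : ℝ) ebar := ⟨h1.1, h1.2.trans hmemE.2⟩
    have m2 : e2 ∈ Set.Ioc (0 : ℝ) ebar := ⟨h2.1, h2.2.trans hmemE.2⟩
    show max (ptil e2) (phat e2) < max (ptil e1) (phat e1)
    rw [max_eq_left ((hiff e1 m1).mpr h1.2), max_eq_left ((hiff e2 m2).mpr h2.2)]
    exact hptil_anti ⟨m1.1.le, m1.2⟩ ⟨m2.1.le, m2.2⟩ h12
  · intro e1 h1 e2 h2 h12
    have he2 : e2 ∈ Set.Ioc (0 : ℝ) ebar := ⟨hmemE.1.trans_le (h1.1.trans h12.le), h2.2⟩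
    have hgt2 : ehat < e2 := lt_of_le_of_lt h1.1 h12
    have hp2 : pbar e2 = phat e2 := hmax2 e2 he2 hgt2
    show pbar e1 < pbar e2
    rw [hp2]
    rcases eq_or_lt_of_le h1.1 with heq | hlt
    · have hr := hroot (lt_of_lt_of_le hgt2 h2.2)
      have hp1 : pbar e1 = ptil e1 := max_eq_left ((hiff e1 (heq ▸ hmemE)).mpr (heq ▸ le_rfl))
      rw [hp1, ← heq, hr]
      exact hphat_mono ⟨hmemE.1.le, hmemE.2⟩ ⟨he2.1.le, he2.2⟩ hgt2
    · have he1 : e1 ∈ Set.Ioc (0 : ℝ) ebar := ⟨hmemE.1.trans hlt, h1.2⟩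
      rw [hmax2 e1 he1 hlt]
      exact hphat_mono ⟨he1.1.le, he1.2⟩ ⟨he2.1.le, he2.2⟩ h12
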